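/- Let X be a finite set of boolean variables and let φ be a conjunction of clauses C₁,…,Cₙ where each clause Cᵢ is a triple (x₁ⁱ, x₂ⁱ, x₃ⁱ) ∈ X³. Consider the ranked alphabet Σ = {nil of arity 0} ∪ { x of arity 1 : x ∈ X }, the output alphabet Γ = {a, #}, and the sample S assigning S(nil) = '#' and, for each clause (x, y, z) of φ, S(x(y(z(nil)))) = 'a#'. Then there exists a 1STS τ over Σ with output in Γ* such that ⟦τ⟧(t) = w for all (t, w) ∈ S if and only if there exists an assignment ν : X → {true, false} such that in every clause of φ exactly one of the three variables is assigned true. -/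

import Mathlib

/-- Trees labelled by symbols from `F`, with a finite list of children at each node. -/
inductive RTree (F : Type) : Type
  | node (f : F) (children : List (RTree F)) : RTree F

namespace RTree

mutual
  /-- The semantics `⟦τ⟧` of a 1STS whose constants are `δ(f) = (τ f 0, …, τ f (ar f))`:
  `⟦τ⟧(f(t₁,…,t_k)) = u₀·⟦τ⟧(t₁)·u₁⋯⟦τ⟧(t_k)·u_k`. -/
  def sem {F Γ : Type} (τ : F → ℕ → List Γ) : RTree F → List Γ
    | .node f ts => τ f 0 ++ semList τ f 1 ts
  def semList {F Γ : Type} (τ : F → ℕ → List Γ) (f : F) : ℕ → List (RTree F) → List Γ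
    | _, [] => []
    | i, t :: ts => sem τ t ++ τ f i ++ semList τ f (i + 1) ts
end

end RTree

/-- The ranked alphabet `Σ = {nil (arity 0)} ∪ {x (arity 1) : x ∈ X}`. -/
inductive SatSym (X : Type) : Type
  | nil : SatSym X
  | var (x : X) : SatSym X

/-- The output alphabet `Γ = {a, #}`. -/
inductive SatLetter : Type
  | a : SatLetter
  | hash : SatLetter

/-- The tree `nil`. -/
def tNil {X : Type} : RTree (SatSym X) := .node .nil []

/-- The tree `x(y(z(nil)))` associated to a clause `(x, y, z)`. -/
def tClause {X : Type} (x y z : X) : RTree (SatSym X) :=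
  .node (.var x) [.node (.var y) [.node (.var z) [tNil]]]

/-!
A 1STS consistent with the sample outputs `#` on `nil`, so on a clause tree `x(y(z(nil)))` its
output is the words of `x`, `y`, `z` wrapped around that `#`. Comparing lengths with `a#`, these
words have total length one, so exactly one of the three symbols carries a nonempty word.
Conversely an assignment `ν` is realised by letting `x` output `a` before its child iff `ν x`.
-/

namespace RTree

variable {F Γ : Type} (τ : F → ℕ → List Γ)

theorem sem_leaf (f : F) : sem τ (.node f []) = τ f 0 := by
  simp [sem, semList]

theorem sem_unary (f : F) (t : RTree F) :
    sem τ (.node f [t]) = τ f 0 ++ sem τ t ++ τ f 1 := by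
  simp [sem, semList]

end RTree

section Transducer

variable {X Γ : Type} (τ : SatSym X → ℕ → List Γ)

theorem sem_tClause (x y z : X) :
    RTree.sem τ (tClause x y z) =
      τ (.var x) 0 ++ τ (.var y) 0 ++ τ (.var z) 0 ++ RTree.sem τ tNil ++
        τ (.var z) 1 ++ τ (.var y) 1 ++ τ (.var x) 1 := by
  simp [tClause, RTree.sem_unary]

def varWeight (x : X) : ℕ := (τ (.var x) 0).length + (τ (.var x) 1).length

theorem length_sem_tClause (x y z : X) :
    (RTree.sem τ (tClause x y z)).length =
      varWeight τ x + varWeight τ y + varWeight τ z + (RTree.sem τ tNil).length := by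
  simp only [sem_tClause, List.length_append, varWeight]
  omega

end Transducer

theorem count_pos_eq_one_of_add_eq_one {a b c : ℕ} (h : a + b + c = 1) :
    [decide (0 < a), decide (0 < b), decide (0 < c)].count true = 1 := by
  obtain ⟨rfl, rfl, rfl⟩ | ⟨rfl, rfl, rfl⟩ | ⟨rfl, rfl, rfl⟩ :
      (a = 1 ∧ b = 0 ∧ c = 0) ∨ (a = 0 ∧ b = 1 ∧ c = 0) ∨ (a = 0 ∧ b = 0 ∧ c = 1) := by
    omega
  all_goals rfl

section Assignment

variable {X : Type} (ν : X → Bool)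

def assignmentSTS : SatSym X → ℕ → List SatLetter
  | .nil, 0 => [.hash]
  | .var x, 0 => if ν x then [.a] else []
  | _, _ => []

theorem sem_assignmentSTS_tNil : RTree.sem (assignmentSTS ν) tNil = [.hash] := by
  simp [tNil, RTree.sem_leaf, assignmentSTS]

theorem sem_assignmentSTS_tClause {x y z : X} (h : [ν x, ν y, ν z].count true = 1) :
    RTree.sem (assignmentSTS ν) (tClause x y z) = [.a, .hash] := by
  rw [sem_tClause, sem_assignmentSTS_tNil]
  simp only [assignmentSTS]
  revert h
  cases ν x <;> cases ν y <;> cases ν z <;> simp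

end Assignment

/-- There is a 1STS `τ` consistent with the sample `S(nil) = '#'`,
`S(x(y(z(nil)))) = 'a#'` for every clause `(x,y,z)`, iff the one-in-three positive SAT
instance is satisfiable: some assignment `ν` makes exactly one variable true in each
clause. -/
theorem exists_1STS_iff_oneInThreeSat (X : Type) [Fintype X]
    (clauses : List (X × X × X)) :
    (∃ τ : SatSym X → ℕ → List SatLetter,
        RTree.sem τ tNil = [SatLetter.hash] ∧
        ∀ cl ∈ clauses,
          RTree.sem τ (tClause cl.1 cl.2.1 cl.2.2) = [SatLetter.a, SatLetter.hash]) ↔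
      (∃ ν : X → Bool, ∀ cl ∈ clauses,
        [ν cl.1, ν cl.2.1, ν cl.2.2].count true = 1) := by
  constructor
  · rintro ⟨τ, hnil, hclauses⟩
    refine ⟨fun x => decide (0 < varWeight τ x), fun cl hcl => ?_⟩
    have hlen := congrArg List.length (hclauses cl hcl)
    rw [length_sem_tClause, hnil] at hlen
    exact count_pos_eq_one_of_add_eq_one (by simpa using hlen)
  · rintro ⟨ν, hν⟩
    exact ⟨assignmentSTS ν, sem_assignmentSTS_tNil ν,
      fun cl hcl => sem_assignmentSTS_tClause ν (hν cl hcl)⟩
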